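/- arXiv:1312.6881 — 8 statements merged into one kernel-verified Lean document; each statement's English description precedes it below -/
import Mathlib

section
/- Define F: ℂ⁶ → ℂ⁶ by F(a,b,c,d,e,f) = (d, (b²-df)/e, f, (d²-fb)/a, b, (f²-bd)/c) and G(a,b,c,d,e,f) = ((a²-ce)/d, e, (c²-ea)/f, a, (e²-ac)/b, c). Then G is a two-sided inverse of F wherever both compositions are defined: for any (a,b,c,d,e,f) with all relevant denominators nonzero, G(F(a,b,c,d,e,f)) = (a,b,c,d,e,f) and F(G(a,b,c,d,e,f)) = (a,b,c,d,e,f). -/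
noncomputable def devronF : ℂ × ℂ × ℂ × ℂ × ℂ × ℂ → ℂ × ℂ × ℂ × ℂ × ℂ × ℂ
  | (a, b, c, d, e, f) =>
      (d, (b ^ 2 - d * f) / e, f, (d ^ 2 - f * b) / a, b, (f ^ 2 - b * d) / c)

noncomputable def devronG : ℂ × ℂ × ℂ × ℂ × ℂ × ℂ → ℂ × ℂ × ℂ × ℂ × ℂ × ℂ
  | (a, b, c, d, e, f) =>
      ((a ^ 2 - c * e) / d, e, (c ^ 2 - e * a) / f, a, (e ^ 2 - a * c) / b, c)

/- Each coordinate of either composite is a copied entry or has the form `p / (p / q)`,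
with `p` one of the numerators assumed nonzero; `p / (p / q) = q` needs only `p ≠ 0`,
since division by zero returns zero on both sides when `q = 0`. -/

theorem devronG_devronF (a b c d e f : ℂ)
    (h1 : b ^ 2 - d * f ≠ 0) (h2 : d ^ 2 - f * b ≠ 0) (h3 : f ^ 2 - b * d ≠ 0) :
    devronG (devronF (a, b, c, d, e, f)) = (a, b, c, d, e, f) := by
  simp only [devronF, devronG, div_div_cancel₀ h1, div_div_cancel₀ h2, div_div_cancel₀ h3]

theorem devronF_devronG (a b c d e f : ℂ)
    (h4 : a ^ 2 - c * e ≠ 0) (h5 : c ^ 2 - e * a ≠ 0) (h6 : e ^ 2 - a * c ≠ 0) :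
    devronF (devronG (a, b, c, d, e, f)) = (a, b, c, d, e, f) := by
  simp only [devronF, devronG, div_div_cancel₀ h4, div_div_cancel₀ h5, div_div_cancel₀ h6]

theorem devron_stmt_2_general (a b c d e f : ℂ)
    (h1 : b ^ 2 - d * f ≠ 0) (h2 : d ^ 2 - f * b ≠ 0) (h3 : f ^ 2 - b * d ≠ 0)
    (h4 : a ^ 2 - c * e ≠ 0) (h5 : c ^ 2 - e * a ≠ 0) (h6 : e ^ 2 - a * c ≠ 0) :
    devronG (devronF (a, b, c, d, e, f)) = (a, b, c, d, e, f) ∧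
    devronF (devronG (a, b, c, d, e, f)) = (a, b, c, d, e, f) :=
  ⟨devronG_devronF a b c d e f h1 h2 h3, devronF_devronG a b c d e f h4 h5 h6⟩

/-- `G` is a two-sided inverse of `F` wherever all relevant denominators are nonzero. -/
theorem devron_stmt_2 (a b c d e f : ℂ)
    (ha : a ≠ 0) (hb : b ≠ 0) (hc : c ≠ 0) (hd : d ≠ 0) (he : e ≠ 0) (hf : f ≠ 0)
    (h1 : b ^ 2 - d * f ≠ 0) (h2 : d ^ 2 - f * b ≠ 0) (h3 : f ^ 2 - b * d ≠ 0)
    (h4 : a ^ 2 - c * e ≠ 0) (h5 : c ^ 2 - e * a ≠ 0) (h6 : e ^ 2 - a * c ≠ 0) :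
    devronG (devronF (a, b, c, d, e, f)) = (a, b, c, d, e, f) ∧
    devronF (devronG (a, b, c, d, e, f)) = (a, b, c, d, e, f) :=
  devron_stmt_2_general a b c d e f h1 h2 h3 h4 h5 h6
end

section
/- Define F: ℂ⁶ → ℂ⁶ by F(a,b,c,d,e,f) = (d, (b²-df)/e, f, (d²-fb)/a, b, (f²-bd)/c). For any t, b, d, f ∈ ℂ with t ≠ 0 and with the intermediate denominators nonzero, the second iterate F²(t,b,t,d,t,f) has its second, fourth, and sixth coordinates all equal to (b³ + d³ + f³ - 3bdf)/t². -/
/-- `x² - yz`, `y² - zx`, `z² - xy` are the cofactors of the circulant matrix with first row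
`(x, y, z)`, whose determinant is `x³ + y³ + z³ - 3xyz`; the identity is `adj (adj C) = det C • C`. -/
theorem sq_sub_mul_cyclic {R : Type*} [CommRing R] (x y z : R) :
    (x ^ 2 - y * z) ^ 2 - (y ^ 2 - z * x) * (z ^ 2 - x * y) =
      x * (x ^ 3 + y ^ 3 + z ^ 3 - 3 * x * y * z) := by
  ring

theorem sq_div_sub_mul_div_cyclic {K : Type*} [Field K] (t x y z : K) (hx : x ≠ 0) :
    (((x ^ 2 - y * z) / t) ^ 2 - (y ^ 2 - z * x) / t * ((z ^ 2 - x * y) / t)) / x =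
      (x ^ 3 + y ^ 3 + z ^ 3 - 3 * x * y * z) / t ^ 2 :=
  calc _ = ((x ^ 2 - y * z) ^ 2 - (y ^ 2 - z * x) * (z ^ 2 - x * y)) / t ^ 2 / x := by ring
    _ = x * ((x ^ 3 + y ^ 3 + z ^ 3 - 3 * x * y * z) / t ^ 2) / x := by
      rw [sq_sub_mul_cyclic, mul_div_assoc]
    _ = _ := mul_div_cancel_left₀ _ hx

theorem devron_stmt_3_general (t b d f : ℂ)
    (hb : b ≠ 0) (hd : d ≠ 0) (hf : f ≠ 0) :
    ∃ p q r : ℂ,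
      devronF (devronF (t, b, t, d, t, f)) =
        (p, (b ^ 3 + d ^ 3 + f ^ 3 - 3 * b * d * f) / t ^ 2,
         q, (b ^ 3 + d ^ 3 + f ^ 3 - 3 * b * d * f) / t ^ 2,
         r, (b ^ 3 + d ^ 3 + f ^ 3 - 3 * b * d * f) / t ^ 2) := by
  have hS_d : d ^ 3 + f ^ 3 + b ^ 3 - 3 * d * f * b = b ^ 3 + d ^ 3 + f ^ 3 - 3 * b * d * f := by
    ring
  have hS_f : f ^ 3 + b ^ 3 + d ^ 3 - 3 * f * b * d = b ^ 3 + d ^ 3 + f ^ 3 - 3 * b * d * f := by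
    ring
  refine ⟨(d ^ 2 - f * b) / t, (f ^ 2 - b * d) / t, (b ^ 2 - d * f) / t, ?_⟩
  simp only [devronF, sq_div_sub_mul_div_cyclic t b d f hb, sq_div_sub_mul_div_cyclic t d f b hd,
    sq_div_sub_mul_div_cyclic t f b d hf, hS_d, hS_f]

/-- The second, fourth and sixth coordinates of `F²(t,b,t,d,t,f)` all equal
`(b³ + d³ + f³ - 3bdf)/t²`. -/
theorem devron_stmt_3 (t b d f : ℂ) (ht : t ≠ 0)
    (hb : b ≠ 0) (hd : d ≠ 0) (hf : f ≠ 0) :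
    ∃ p q r : ℂ,
      devronF (devronF (t, b, t, d, t, f)) =
        (p, (b ^ 3 + d ^ 3 + f ^ 3 - 3 * b * d * f) / t ^ 2,
         q, (b ^ 3 + d ^ 3 + f ^ 3 - 3 * b * d * f) / t ^ 2,
         r, (b ^ 3 + d ^ 3 + f ^ 3 - 3 * b * d * f) / t ^ 2) :=
  devron_stmt_3_general t b d f hb hd hf
end

section
/- Let (f_{i,j,k}) (indexed by i,j,k ∈ ℤ with i+j+k even, k ≥ 0) be a solution of the octahedron recurrence f_{i,j,k-1}·f_{i,j,k+1} = f_{i-1,j,k}·f_{i+1,j,k} + λ·f_{i,j-1,k}·f_{i,j+1,k}, and let μ_l, ν_l be nonzero scalars for l ∈ ℤ. Define m_{i,j,k} = μ_{(i-j)/2}·ν_{(i+j)/2} for k = 0, m_{i,j,1} = 1, and m_{i,j,k} = ∏_{l=1}^{k-1} 1/(μ_{(i-j-k)/2+l}·ν_{(i+j-k)/2+l}) for k ≥ 2. Then g_{i,j,k} := m_{i,j,k}·f_{i,j,k} also satisfies the octahedron recurrence for all k ≥ 1. -/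
open scoped BigOperators

/-!
The multipliers form a gauge: `m_{i,j,k-1} m_{i,j,k+1}` equals both `m_{i-1,j,k} m_{i+1,j,k}` and
`m_{i,j-1,k} m_{i,j+1,k}`, so every term of the recurrence at `(i,j,k)` is rescaled by the same
factor. For `k = 1` this is `μ ν · (μ ν)⁻¹ = 1`. For `k ≥ 2`, `m_{i,j,k}` is a product of a
`μ⁻¹`-block and a `ν⁻¹`-block of `k - 1` consecutive values, and both identities reduce to
`P(a+1, n) P(a, n+2) = P(a, n+1) P(a+1, n+1)` for products `P(a, n)` of `n` consecutive values
starting at `a`.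
-/

namespace Octahedron

open Finset

theorem mul_mul_add_of_gauge {R : Type*} [CommRing R] {lam f₀ f₂ fw fe fs fn m₀ m₂ mw me ms mn : R}
    (hf : f₀ * f₂ = fw * fe + lam * fs * fn) (hwe : m₀ * m₂ = mw * me) (hsn : m₀ * m₂ = ms * mn) :
    (m₀ * f₀) * (m₂ * f₂) = (mw * fw) * (me * fe) + lam * (ms * fs) * (mn * fn) := by
  linear_combination (m₀ * m₂) * hf + (fw * fe) * hwe + (lam * fs * fn) * hsn

section ConsecutiveProd

variable {M : Type*} [CommMonoid M]

def consecutiveProd (u : ℤ → M) (a : ℤ) (n : ℕ) : M :=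
  ∏ l ∈ range n, u (a + l)

theorem consecutiveProd_zero (u : ℤ → M) (a : ℤ) : consecutiveProd u a 0 = 1 :=
  prod_range_zero _

theorem consecutiveProd_succ (u : ℤ → M) (a : ℤ) (n : ℕ) :
    consecutiveProd u a (n + 1) = u a * consecutiveProd u (a + 1) n := by
  rw [consecutiveProd, consecutiveProd, prod_range_succ', mul_comm]
  push_cast
  simp only [add_zero, add_comm (1 : ℤ), add_assoc]

theorem consecutiveProd_mul_consecutiveProd (u : ℤ → M) (a : ℤ) (n : ℕ) :
    consecutiveProd u (a + 1) n * consecutiveProd u a (n + 2) =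
      consecutiveProd u a (n + 1) * consecutiveProd u (a + 1) (n + 1) := by
  rw [consecutiveProd_succ u a (n + 1), consecutiveProd_succ u a n, mul_left_comm, mul_assoc]

end ConsecutiveProd

section Multipliers

variable {K : Type*} [Field K] {μ ν : ℤ → K} {m : ℤ → ℤ → ℕ → K}

theorem multiplier_eq_consecutiveProd (hm1 : ∀ i j : ℤ, m i j 1 = 1)
    (hm2 : ∀ (i j : ℤ) (k : ℕ), 2 ≤ k →
      m i j k = ∏ l ∈ range (k - 1),
        (μ ((i - j - (k : ℤ)) / 2 + (l + 1)) * ν ((i + j - (k : ℤ)) / 2 + (l + 1)))⁻¹)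
    {i j a b : ℤ} {n : ℕ} (ha : (i - j - (n + 1 : ℤ)) / 2 = a) (hb : (i + j - (n + 1 : ℤ)) / 2 = b) :
    m i j (n + 1) = consecutiveProd μ⁻¹ (a + 1) n * consecutiveProd ν⁻¹ (b + 1) n := by
  cases n with
  | zero => simp [hm1, consecutiveProd_zero]
  | succ n =>
    rw [hm2 i j _ (by omega), consecutiveProd, consecutiveProd, ← prod_mul_distrib]
    refine prod_congr (by simp) fun l _ => ?_
    push_cast at ha hb ⊢
    rw [ha, hb, mul_inv, Pi.inv_apply, Pi.inv_apply]
    ring_nf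

theorem multiplier_gauge (hμ : ∀ l, μ l ≠ 0) (hν : ∀ l, ν l ≠ 0)
    (hm0 : ∀ i j : ℤ, Even (i + j) → m i j 0 = μ ((i - j) / 2) * ν ((i + j) / 2))
    (hm1 : ∀ i j : ℤ, m i j 1 = 1)
    (hm2 : ∀ (i j : ℤ) (k : ℕ), 2 ≤ k →
      m i j k = ∏ l ∈ range (k - 1),
        (μ ((i - j - (k : ℤ)) / 2 + (l + 1)) * ν ((i + j - (k : ℤ)) / 2 + (l + 1)))⁻¹)
    {i j : ℤ} {k : ℕ} (hodd : Odd (i + j + (k + 1 : ℤ))) :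
    m i j k * m i j (k + 2) = m (i - 1) j (k + 1) * m (i + 1) j (k + 1) ∧
      m i j k * m i j (k + 2) = m i (j - 1) (k + 1) * m i (j + 1) (k + 1) := by
  rw [Int.odd_iff] at hodd
  cases k with
  | zero =>
    have hunit : m i j 0 * m i j 2 = 1 := by
      rw [hm0 i j (by rw [Int.even_iff]; omega), multiplier_eq_consecutiveProd
        (a := (i - j) / 2 - 1) (b := (i + j) / 2 - 1) hm1 hm2 (by omega) (by omega)]
      simp only [consecutiveProd_succ, consecutiveProd_zero, Pi.inv_apply, mul_one, sub_add_cancel]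
      rw [← mul_inv]
      exact mul_inv_cancel₀ (mul_ne_zero (hμ _) (hν _))
    simp only [hm1, hunit, mul_one, and_self]
  | succ n =>
    set a := (i - j - (n + 1 : ℤ)) / 2
    set b := (i + j - (n + 1 : ℤ)) / 2
    have P := consecutiveProd_mul_consecutiveProd (μ⁻¹) a n
    have Q := consecutiveProd_mul_consecutiveProd (ν⁻¹) b n
    rw [multiplier_eq_consecutiveProd hm1 hm2 rfl rfl,
      multiplier_eq_consecutiveProd (a := a - 1) (b := b - 1) hm1 hm2 (by omega) (by omega),
      multiplier_eq_consecutiveProd (a := a - 1) (b := b - 1) hm1 hm2 (by omega) (by omega),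
      multiplier_eq_consecutiveProd (a := a) (b := b) hm1 hm2 (by omega) (by omega),
      multiplier_eq_consecutiveProd (a := a) (b := b - 1) hm1 hm2 (by omega) (by omega),
      multiplier_eq_consecutiveProd (a := a - 1) (b := b) hm1 hm2 (by omega) (by omega)]
    simp only [sub_add_cancel]
    constructor <;> linear_combination
      (consecutiveProd ν⁻¹ (b + 1) n * consecutiveProd ν⁻¹ b (n + 2)) * P +
        (consecutiveProd μ⁻¹ a (n + 1) * consecutiveProd μ⁻¹ (a + 1) (n + 1)) * Q

end Multipliers

end Octahedron

open Octahedron in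
theorem devron_stmt_5_general (lam : ℂ)
    (f : ℤ → ℤ → ℕ → ℂ)
    (hf : ∀ (i j : ℤ) (k : ℕ), Odd (i + j + (k + 1 : ℤ)) →
      f i j k * f i j (k + 2) =
        f (i - 1) j (k + 1) * f (i + 1) j (k + 1) +
          lam * f i (j - 1) (k + 1) * f i (j + 1) (k + 1))
    (μ ν : ℤ → ℂ) (hμ : ∀ l, μ l ≠ 0) (hν : ∀ l, ν l ≠ 0)
    (m : ℤ → ℤ → ℕ → ℂ)
    (hm0 : ∀ i j : ℤ, Even (i + j) → m i j 0 = μ ((i - j) / 2) * ν ((i + j) / 2))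
    (hm1 : ∀ i j : ℤ, m i j 1 = 1)
    (hm2 : ∀ (i j : ℤ) (k : ℕ), 2 ≤ k →
      m i j k = ∏ l ∈ Finset.range (k - 1),
        (μ ((i - j - (k : ℤ)) / 2 + (l + 1)) * ν ((i + j - (k : ℤ)) / 2 + (l + 1)))⁻¹) :
    ∀ (i j : ℤ) (k : ℕ), Odd (i + j + (k + 1 : ℤ)) →
      (m i j k * f i j k) * (m i j (k + 2) * f i j (k + 2)) =
        (m (i - 1) j (k + 1) * f (i - 1) j (k + 1)) *
            (m (i + 1) j (k + 1) * f (i + 1) j (k + 1)) +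
          lam * (m i (j - 1) (k + 1) * f i (j - 1) (k + 1)) *
            (m i (j + 1) (k + 1) * f i (j + 1) (k + 1)) := by
  intro i j k hodd
  obtain ⟨hwe, hsn⟩ := multiplier_gauge hμ hν hm0 hm1 hm2 hodd
  exact mul_mul_add_of_gauge (hf i j k hodd) hwe hsn

/-- Rescaling a solution of the octahedron recurrence by the multipliers `m_{i,j,k}`
yields another solution. -/
theorem devron_stmt_5 (lam : ℂ) (hlam : lam ≠ 0)
    (f : ℤ → ℤ → ℕ → ℂ)
    (hf : ∀ (i j : ℤ) (k : ℕ), Odd (i + j + (k + 1 : ℤ)) →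
      f i j k * f i j (k + 2) =
        f (i - 1) j (k + 1) * f (i + 1) j (k + 1) +
          lam * f i (j - 1) (k + 1) * f i (j + 1) (k + 1))
    (μ ν : ℤ → ℂ) (hμ : ∀ l, μ l ≠ 0) (hν : ∀ l, ν l ≠ 0)
    (m : ℤ → ℤ → ℕ → ℂ)
    (hm0 : ∀ i j : ℤ, Even (i + j) → m i j 0 = μ ((i - j) / 2) * ν ((i + j) / 2))
    (hm1 : ∀ i j : ℤ, m i j 1 = 1)
    (hm2 : ∀ (i j : ℤ) (k : ℕ), 2 ≤ k →
      m i j k = ∏ l ∈ Finset.range (k - 1),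
        (μ ((i - j - (k : ℤ)) / 2 + (l + 1)) * ν ((i + j - (k : ℤ)) / 2 + (l + 1)))⁻¹) :
    ∀ (i j : ℤ) (k : ℕ), Odd (i + j + (k + 1 : ℤ)) →
      (m i j k * f i j k) * (m i j (k + 2) * f i j (k + 2)) =
        (m (i - 1) j (k + 1) * f (i - 1) j (k + 1)) *
            (m (i + 1) j (k + 1) * f (i + 1) j (k + 1)) +
          lam * (m i (j - 1) (k + 1) * f i (j - 1) (k + 1)) *
            (m i (j + 1) (k + 1) * f i (j + 1) (k + 1)) :=
  devron_stmt_5_general lam f hf μ ν hμ hν m hm0 hm1 hm2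
end

section
/- With m_{i,j,k} defined as in the rescaling proposition for the octahedron recurrence (m_{i,j,0} = μ_{(i-j)/2}·ν_{(i+j)/2}, m_{i,j,1} = 1, m_{i,j,k} = ∏_{l=1}^{k-1} 1/(μ_{(i-j-k)/2+l}·ν_{(i+j-k)/2+l}) for k ≥ 2), one has m_{i-1,j,k}·m_{i+1,j,k} = m_{i,j-1,k}·m_{i,j+1,k} = m_{i,j,k-1}·m_{i,j,k+1} for all i+j+k odd with k ≥ 1. -/
/-!
For `k ≥ 1`, `m_{i,j,k}` is the product of a window of `k - 1` consecutive values of `μ⁻¹` and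
one of `ν⁻¹`, starting at `(i - j - k)/2 + 1` and `(i + j - k)/2 + 1`. In the first identity both
sides consist of the same four windows. Writing `W(s, n)` for the window of length `n` starting
at `s`, the second one reduces, for each of `μ` and `ν`, to
`W(s, n+1) · W(s+1, n+1) = W(s+1, n) · W(s, n+2)` (both sides equal `W(s, n+1) · W(s+1, n)`
times the entry at `s + n + 1`), except at `k = 1`, where it is `μ ν · (μ ν)⁻¹ = 1`.
-/

open scoped BigOperators

open Finset

section WindowProd

variable {M : Type*} [CommMonoid M]

def windowProd (g : ℤ → M) (s : ℤ) (n : ℕ) : M :=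
  ∏ l ∈ range n, g (s + l)

@[simp]
lemma windowProd_zero (g : ℤ → M) (s : ℤ) : windowProd g s 0 = 1 :=
  prod_range_zero _

lemma windowProd_succ (g : ℤ → M) (s : ℤ) (n : ℕ) :
    windowProd g s (n + 1) = windowProd g s n * g (s + n) :=
  prod_range_succ _ _

@[simp]
lemma windowProd_one (g : ℤ → M) (s : ℤ) : windowProd g s 1 = g s := by
  simp [windowProd]

lemma windowProd_succ_mul_windowProd_succ (g : ℤ → M) (s : ℤ) (n : ℕ) :
    windowProd g s (n + 1) * windowProd g (s + 1) (n + 1) =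
      windowProd g (s + 1) n * windowProd g s (n + 2) := by
  rw [windowProd_succ g (s + 1) n, windowProd_succ g s (n + 1),
    show s + 1 + (n : ℤ) = s + ((n + 1 : ℕ) : ℤ) by push_cast; ring]
  exact mul_left_comm _ _ _

end WindowProd

lemma eq_windowProd_mul_windowProd {μ ν : ℤ → ℂ} {m : ℤ → ℤ → ℕ → ℂ}
    (hm1 : ∀ i j : ℤ, m i j 1 = 1)
    (hm2 : ∀ (i j : ℤ) (k : ℕ), 2 ≤ k →
      m i j k = ∏ l ∈ Finset.range (k - 1),
        (μ ((i - j - (k : ℤ)) / 2 + (l + 1)) * ν ((i + j - (k : ℤ)) / 2 + (l + 1)))⁻¹)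
    (i j : ℤ) (k : ℕ) (p q : ℤ) (hp : 2 * p = i - j - k + 1) (hq : 2 * q = i + j - k + 1) :
    m i j (k + 1) = windowProd (fun l ↦ (μ l)⁻¹) p k * windowProd (fun l ↦ (ν l)⁻¹) q k := by
  cases k with
  | zero => simp [hm1]
  | succ n =>
    rw [hm2 i j (n + 1 + 1) (by omega), Nat.add_sub_cancel, windowProd, windowProd,
      ← prod_mul_distrib]
    refine prod_congr rfl fun l _ ↦ ?_
    push_cast at hp hq ⊢
    rw [mul_inv, show (i - j - (n + 1 + 1)) / 2 + (l + 1) = p + l by omega,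
      show (i + j - (n + 1 + 1)) / 2 + (l + 1) = q + l by omega]

/-- The multipliers `m_{i,j,k}` of the octahedron-recurrence rescaling satisfy
`m_{i-1,j,k}·m_{i+1,j,k} = m_{i,j-1,k}·m_{i,j+1,k} = m_{i,j,k-1}·m_{i,j,k+1}`
for all `i+j+k` odd with `k ≥ 1`. -/
theorem devron_stmt_6
    (μ ν : ℤ → ℂ) (hμ : ∀ l, μ l ≠ 0) (hν : ∀ l, ν l ≠ 0)
    (m : ℤ → ℤ → ℕ → ℂ)
    (hm0 : ∀ i j : ℤ, Even (i + j) → m i j 0 = μ ((i - j) / 2) * ν ((i + j) / 2))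
    (hm1 : ∀ i j : ℤ, m i j 1 = 1)
    (hm2 : ∀ (i j : ℤ) (k : ℕ), 2 ≤ k →
      m i j k = ∏ l ∈ Finset.range (k - 1),
        (μ ((i - j - (k : ℤ)) / 2 + (l + 1)) * ν ((i + j - (k : ℤ)) / 2 + (l + 1)))⁻¹) :
    ∀ (i j : ℤ) (k : ℕ), Odd (i + j + (k + 1 : ℤ)) →
      m (i - 1) j (k + 1) * m (i + 1) j (k + 1) = m i (j - 1) (k + 1) * m i (j + 1) (k + 1) ∧
      m i (j - 1) (k + 1) * m i (j + 1) (k + 1) = m i j k * m i j (k + 2) := by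
  intro i j k ⟨t, ht⟩
  obtain ⟨p, q, hp, hq⟩ : ∃ p q : ℤ, 2 * p = i - j - k ∧ 2 * q = i + j - k :=
    ⟨t - j - k, t - k, by omega, by omega⟩
  have hm := eq_windowProd_mul_windowProd hm1 hm2
  rw [hm (i - 1) j k p q (by omega) (by omega),
    hm (i + 1) j k (p + 1) (q + 1) (by omega) (by omega),
    hm i (j - 1) k (p + 1) q (by omega) (by omega),
    hm i (j + 1) k p (q + 1) (by omega) (by omega),
    hm i j (k + 1) p q (by push_cast; omega) (by push_cast; omega)]
  refine ⟨by ring, ?_⟩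
  cases k with
  | zero =>
    simp only [Nat.cast_zero, sub_zero] at hp hq
    rw [hm0 i j ⟨q, by omega⟩, show (i - j) / 2 = p by omega, show (i + j) / 2 = q by omega,
      windowProd_one, windowProd_one, mul_mul_mul_comm (μ p), mul_inv_cancel₀ (hμ p),
      mul_inv_cancel₀ (hν q)]
    simp
  | succ n =>
    rw [hm i j n (p + 1) (q + 1) (by push_cast at hp ⊢; omega) (by push_cast at hq ⊢; omega)]
    linear_combination
      (windowProd (fun l ↦ (ν l)⁻¹) q (n + 1) * windowProd (fun l ↦ (ν l)⁻¹) (q + 1) (n + 1)) *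
        windowProd_succ_mul_windowProd_succ (fun l ↦ (μ l)⁻¹) p n +
      (windowProd (fun l ↦ (μ l)⁻¹) (p + 1) n * windowProd (fun l ↦ (μ l)⁻¹) p (n + 2)) *
        windowProd_succ_mul_windowProd_succ (fun l ↦ (ν l)⁻¹) q n
end

section
/- Let B be a k×k matrix with nonzero entries and let B* be its lift: the unique (k+1)×(k+1) matrix with 1's on the diagonal and subdiagonal such that for all i,j ∈ {1,...,k}, b_{i,j} = -(b*_{i+1,j}·b*_{i,j+1})/(b*_{i,j}·b*_{i+1,j+1}). Let C be any (k+1)×(k+1) matrix with nonzero entries whose consecutive negated double ratios also give the entries of B, i.e. b_{i,j} = -(c_{i+1,j}·c_{i,j+1})/(c_{i,j}·c_{i+1,j+1}) for all i,j. Then det(C) = (∏_{i=1}^{k+1} c_{i,i}) · det(B*). -/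
/-!
Dividing `C` entrywise by `B*` gives a matrix with nonzero entries all of whose consecutive
double ratios equal `1`, i.e. consecutive rows are proportional. Such a matrix factors as
`r i * s j`, so `C = diag r * B* * diag s` and `det C = ∏ r * ∏ s * det B*`; since the diagonal
of `B*` is `1`, comparing diagonals gives `∏ c_{i,i} = ∏ r * ∏ s`.
-/

open Matrix

theorem Fin.apply_eq_apply_zero_of_succ {α : Type*} {n : ℕ} {f : Fin (n + 1) → α}
    (h : ∀ i : Fin n, f i.succ = f i.castSucc) (i : Fin (n + 1)) : f i = f 0 := by
  induction i using Fin.induction with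
  | zero => rfl
  | succ i ih => rw [h i, ih]

theorem div_apply_zero_eq_of_succ_div {G : Type*} [CommGroup G] {m n : ℕ}
    {D : Fin (m + 1) → Fin (n + 1) → G}
    (h : ∀ (i : Fin m) (j : Fin n),
      D i.succ j.succ / D i.castSucc j.succ = D i.succ j.castSucc / D i.castSucc j.castSucc)
    (i : Fin (m + 1)) (j : Fin (n + 1)) : D i j / D i 0 = D 0 j / D 0 0 := by
  have row (i : Fin m) : D i.succ j / D i.castSucc j = D i.succ 0 / D i.castSucc 0 :=
    Fin.apply_eq_apply_zero_of_succ (f := fun j => D i.succ j / D i.castSucc j) (h i) j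
  exact Fin.apply_eq_apply_zero_of_succ (f := fun i => D i j / D i 0)
    (fun i => div_eq_div_iff_div_eq_div.2 (row i)) i

theorem Matrix.det_eq_prod_mul_prod_mul_det_of_apply_eq {R ι : Type*} [CommRing R] [Fintype ι]
    [DecidableEq ι] {M N : Matrix ι ι R} {r s : ι → R} (h : ∀ i j, N i j = r i * M i j * s j) :
    N.det = (∏ i, r i) * (∏ i, s i) * M.det := by
  have hN : N = diagonal r * M * diagonal s := by
    ext i j
    rw [mul_diagonal, diagonal_mul, h]
  rw [hN, det_mul, det_mul, det_diagonal, det_diagonal]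
  ring

section NegDoubleRatios

variable {K : Type*} [Field K] {n : ℕ}

def Matrix.negDoubleRatios (M : Matrix (Fin (n + 1)) (Fin (n + 1)) K) :
    Matrix (Fin n) (Fin n) K :=
  of fun i j => -(M i.succ j.castSucc * M i.castSucc j.succ) /
    (M i.castSucc j.castSucc * M i.succ j.succ)

theorem Matrix.exists_apply_eq_mul_mul_of_negDoubleRatios_eq
    {M N : Matrix (Fin (n + 1)) (Fin (n + 1)) K} (hM : ∀ i j, M i j ≠ 0) (hN : ∀ i j, N i j ≠ 0)
    (h : M.negDoubleRatios = N.negDoubleRatios) :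
    ∃ r s : Fin (n + 1) → K, ∀ i j, N i j = r i * M i j * s j := by
  set D : Fin (n + 1) → Fin (n + 1) → Kˣ :=
    fun i j => Units.mk0 (N i j) (hN i j) / Units.mk0 (M i j) (hM i j) with hD
  have hDval (i j) : (D i j : K) = N i j / M i j := by simp [hD]
  have hcross (i j : Fin n) : D i.succ j.succ / D i.castSucc j.succ =
      D i.succ j.castSucc / D i.castSucc j.castSucc := by
    have hij := congrFun₂ h i j
    simp only [negDoubleRatios, of_apply, neg_div, neg_inj] at hij
    ext
    simp only [Units.val_div_eq_div_val, hDval]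
    field_simp [hM, hN] at hij ⊢
    linear_combination hij
  refine ⟨fun i => D i 0, fun j => ((D 0 j / D 0 0 : Kˣ) : K), fun i j => ?_⟩
  have hDij := div_eq_iff_eq_mul.1 (div_apply_zero_eq_of_succ_div hcross i j)
  have hNM : N i j = D i j * M i j := by rw [hDval, div_mul_cancel₀ _ (hM i j)]
  rw [hNM, hDij]
  push_cast
  ring

end NegDoubleRatios

theorem devron_stmt_9_general (k : ℕ)
    (B : Matrix (Fin k) (Fin k) ℂ)
    (Bs : Matrix (Fin (k + 1)) (Fin (k + 1)) ℂ)
    (hBs : ∀ i j, Bs i j ≠ 0)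
    (hBsDiag : ∀ i : Fin (k + 1), Bs i i = 1)
    (hBsRatio : ∀ i j : Fin k,
      B i j = -(Bs i.succ j.castSucc * Bs i.castSucc j.succ) /
        (Bs i.castSucc j.castSucc * Bs i.succ j.succ))
    (C : Matrix (Fin (k + 1)) (Fin (k + 1)) ℂ)
    (hC : ∀ i j, C i j ≠ 0)
    (hCRatio : ∀ i j : Fin k,
      B i j = -(C i.succ j.castSucc * C i.castSucc j.succ) /
        (C i.castSucc j.castSucc * C i.succ j.succ)) :
    C.det = (∏ i, C i i) * Bs.det := by
  have hBs_ratios : Bs.negDoubleRatios = B := ext fun i j => (hBsRatio i j).symm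
  have hC_ratios : C.negDoubleRatios = B := ext fun i j => (hCRatio i j).symm
  obtain ⟨r, s, hrs⟩ :=
    exists_apply_eq_mul_mul_of_negDoubleRatios_eq hBs hC (hBs_ratios.trans hC_ratios.symm)
  have hdiag : ∏ i, C i i = (∏ i, r i) * ∏ i, s i := by
    simp only [hrs, hBsDiag, mul_one, Finset.prod_mul_distrib]
  rw [det_eq_prod_mul_prod_mul_det_of_apply_eq hrs, hdiag]

/-- If `B*` is the lift of a `k×k` matrix `B` (ones on the diagonal and subdiagonal,
consecutive negated double ratios giving `B`) and `C` is any `(k+1)×(k+1)` matrix whose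
consecutive negated double ratios also give `B`, then
`det C = (∏ i, c_{i,i}) · det B*`. -/
theorem devron_stmt_9 (k : ℕ)
    (B : Matrix (Fin k) (Fin k) ℂ) (hB : ∀ i j, B i j ≠ 0)
    (Bs : Matrix (Fin (k + 1)) (Fin (k + 1)) ℂ)
    (hBs : ∀ i j, Bs i j ≠ 0)
    (hBsDiag : ∀ i : Fin (k + 1), Bs i i = 1)
    (hBsSub : ∀ i : Fin k, Bs i.succ i.castSucc = 1)
    (hBsRatio : ∀ i j : Fin k,
      B i j = -(Bs i.succ j.castSucc * Bs i.castSucc j.succ) /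
        (Bs i.castSucc j.castSucc * Bs i.succ j.succ))
    (C : Matrix (Fin (k + 1)) (Fin (k + 1)) ℂ)
    (hC : ∀ i j, C i j ≠ 0)
    (hCRatio : ∀ i j : Fin k,
      B i j = -(C i.succ j.castSucc * C i.castSucc j.succ) /
        (C i.castSucc j.castSucc * C i.succ j.succ)) :
    C.det = (∏ i, C i i) * Bs.det :=
  devron_stmt_9_general k B Bs hBs hBsDiag hBsRatio C hC hCRatio
end

section
/- Let C be an (n+1)×(n+1) matrix with nonzero entries whose matrix of consecutive negated double ratios -(c_{i+1,j}c_{i,j+1})/(c_{i,j}c_{i+1,j+1}) coincides with that of the lift B* of an n×n matrix B, i.e., both have the same matrix B of negated double ratios. Then C can be obtained from B* by multiplying rows and columns by nonzero scalars: there exist nonzero scalars r_1,...,r_{n+1} and s_1,...,s_{n+1} such that c_{i,j} = r_i · s_j · b*_{i,j} for all i,j. -/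
/-- If `C` has the same consecutive negated double ratios as the lift `B*` of an `n×n`
matrix `B`, then `C` is obtained from `B*` by rescaling rows and columns by nonzero
scalars. -/
theorem devron_stmt_10 (n : ℕ)
    (B : Matrix (Fin n) (Fin n) ℂ) (hB : ∀ i j, B i j ≠ 0)
    (Bs : Matrix (Fin (n + 1)) (Fin (n + 1)) ℂ)
    (hBs : ∀ i j, Bs i j ≠ 0)
    (hBsDiag : ∀ i : Fin (n + 1), Bs i i = 1)
    (hBsSub : ∀ i : Fin n, Bs i.succ i.castSucc = 1)
    (hBsRatio : ∀ i j : Fin n,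
      B i j = -(Bs i.succ j.castSucc * Bs i.castSucc j.succ) /
        (Bs i.castSucc j.castSucc * Bs i.succ j.succ))
    (C : Matrix (Fin (n + 1)) (Fin (n + 1)) ℂ)
    (hC : ∀ i j, C i j ≠ 0)
    (hCRatio : ∀ i j : Fin n,
      B i j = -(C i.succ j.castSucc * C i.castSucc j.succ) /
        (C i.castSucc j.castSucc * C i.succ j.succ)) :
    ∃ r s : Fin (n + 1) → ℂ, (∀ i, r i ≠ 0) ∧ (∀ j, s j ≠ 0) ∧
      ∀ i j, C i j = r i * s j * Bs i j := by

  set D : Fin (n+1) → Fin (n+1) → ℂ := fun i j => C i j / Bs i j with hD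
  have hDne : ∀ i j, D i j ≠ 0 := fun i j => div_ne_zero (hC i j) (hBs i j)
  have key : ∀ i j : Fin n,
      D i.castSucc j.castSucc * D i.succ j.succ
        = D i.succ j.castSucc * D i.castSucc j.succ := by
    intro i j
    have h := (hBsRatio i j).symm.trans (hCRatio i j)
    rw [div_eq_div_iff (mul_ne_zero (hBs _ _) (hBs _ _))
      (mul_ne_zero (hC _ _) (hC _ _))] at h
    simp only [hD]
    rw [div_mul_div_comm, div_mul_div_comm,
      div_eq_div_iff (mul_ne_zero (hBs _ _) (hBs _ _))
        (mul_ne_zero (hBs _ _) (hBs _ _))]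
    linear_combination -h
  have P : ∀ i j, D i j * D 0 0 = D i 0 * D 0 j := by
    intro i
    induction i using Fin.induction with
    | zero => intro j; ring
    | succ i ih =>
      intro j
      induction j using Fin.induction with
      | zero => ring
      | succ j ihj =>
        have k := key i j
        have h1 := ih j.castSucc
        have h2 := ih j.succ
        apply mul_left_cancel₀
          (mul_ne_zero (hDne i.castSucc j.castSucc) (hDne 0 0))
        linear_combination (D 0 0)^2 * k + D i.castSucc j.succ * D 0 0 * ihj
          + D i.succ 0 * D 0 j.castSucc * h2 - D i.succ 0 * D 0 j.succ * h1
  refine ⟨fun i => D i 0, fun j => D 0 j / D 0 0, fun i => hDne i 0,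
    fun j => div_ne_zero (hDne 0 j) (hDne 0 0), fun i j => ?_⟩
  have hij := P i j
  have : D i j = D i 0 * (D 0 j / D 0 0) := by
    rw [mul_div_assoc', eq_div_iff (hDne 0 0)]
    linear_combination hij
  have hCij : C i j = D i j * Bs i j := by
    simp only [hD]; rw [div_mul_cancel₀ _ (hBs i j)]
  rw [hCij, this]
end

section
/- Consider the Y-system map G acting on Λ-periodic data: given (u_{i,j})_{i,j∈ℤ} periodic with respect to a finite-index sublattice and σ ∈ {0,1}, set u'_{i,j} = u_{i,j}^{-1} if i+j ≢ σ (mod 2) and u'_{i,j} = u_{i,j}·(1+u_{i,j-1})(1+u_{i,j+1})/((1+u_{i-1,j}^{-1})(1+u_{i+1,j}^{-1})) if i+j ≡ σ (mod 2). Then the product ρ of the distinct entries (over a fundamental domain of the periodicity lattice) is conserved: ρ(u', 1-σ) = ρ(u, σ). -/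
/-!
Colour the sites by the parity of `i + j`; `Λ'` preserves colours, and the map applies the
`Y`-system formula on the sites of colour `σ` and inverts the others. Translation by a unit
vector flips the colour, so modulo `Λ'` it maps the `σ`-sites of the fundamental domain `D`
bijectively onto the other sites of `D`. Hence each of the four neighbour products over the
`σ`-sites equals the product of `1 + u` or `1 + u⁻¹` over the other sites, and since
`1 + x = x (1 + x⁻¹)` their ratio is the square of `∏ u` over the other sites, which cancels
against the inverted entries.
-/

open Finset

section FundamentalDomain

variable {G M : Type*} [AddCommGroup G] [CommMonoid M] {Λ : AddSubgroup G} {D : Finset G}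

theorem prod_comp_add_eq_prod_of_periodic (hD : ∀ v : G, ∃! d, d ∈ D ∧ v - d ∈ Λ)
    {F : G → M} (hF : ∀ v, ∀ w ∈ Λ, F (v + w) = F v) (e : G) :
    ∏ p ∈ D, F (p + e) = ∏ p ∈ D, F p := by
  choose r hr hr_unique using hD
  have hr_shift : ∀ x, ∀ a ∈ D, r (r (a + x) + -x) = a := fun x a ha =>
    (hr_unique _ a ⟨ha, by convert neg_mem (hr (a + x)).2 using 1; abel⟩).symm
  refine prod_nbij' (fun p => r (p + e)) (fun p => r (p + -e)) (fun _ _ => (hr _).1)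
    (fun _ _ => (hr _).1) (hr_shift e) (fun a ha => by simpa using hr_shift (-e) a ha)
    (fun a _ => ?_)
  simpa using hF (r (a + e)) _ (hr (a + e)).2

theorem prod_filter_comp_add_eq_prod_filter_not (hD : ∀ v : G, ∃! d, d ∈ D ∧ v - d ∈ Λ)
    {F : G → M} (hF : ∀ v, ∀ w ∈ Λ, F (v + w) = F v) {P : G → Prop} [DecidablePred P]
    (hP : ∀ v, ∀ w ∈ Λ, P (v + w) ↔ P v) {e : G} (he : ∀ p, P (p + e) ↔ ¬ P p) :
    ∏ p ∈ D with P p, F (p + e) = ∏ p ∈ D with ¬ P p, F p := by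
  have hF' : ∀ v, ∀ w ∈ Λ, (if ¬ P (v + w) then F (v + w) else 1) = if ¬ P v then F v else 1 :=
    fun v w hw => by simp only [hP v w hw, hF v w hw]
  rw [prod_filter, prod_filter,
    ← prod_comp_add_eq_prod_of_periodic hD (F := fun v => if ¬ P v then F v else 1) hF' e]
  simp only [he, not_not]

end FundamentalDomain

theorem one_add_eq_mul_one_add_inv {K : Type*} [DivisionRing K] {x : K} (hx : x ≠ 0) :
    1 + x = x * (1 + x⁻¹) := by
  rw [mul_add, mul_one, mul_inv_cancel₀ hx, add_comm]

theorem one_add_inv_ne_zero {K : Type*} [DivisionRing K] {x : K} (hx : x ≠ -1) :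
    1 + x⁻¹ ≠ 0 := by
  intro h
  have hinv : x⁻¹ = -1 := eq_neg_of_add_eq_zero_right h
  exact hx (by rw [← inv_inv x, hinv, inv_neg, inv_one])

theorem Finset.prod_one_add_eq_prod_mul_prod_one_add_inv {ι K : Type*} [Field K]
    (s : Finset ι) {f : ι → K} (hf : ∀ i ∈ s, f i ≠ 0) :
    ∏ i ∈ s, (1 + f i) = (∏ i ∈ s, f i) * ∏ i ∈ s, (1 + (f i)⁻¹) := by
  rw [← prod_mul_distrib]
  exact prod_congr rfl fun i hi => one_add_eq_mul_one_add_inv (hf i hi)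

theorem prod_checkerboard_comp_add {M : Type*} [CommMonoid M] {Λ : AddSubgroup (ℤ × ℤ)}
    (hpar : ∀ v ∈ Λ, Even (v.1 + v.2)) {D : Finset (ℤ × ℤ)}
    (hD : ∀ v : ℤ × ℤ, ∃! d, d ∈ D ∧ v - d ∈ Λ) {F : ℤ × ℤ → M}
    (hF : ∀ v, ∀ w ∈ Λ, F (v + w) = F v) (σ : ℤ) {e : ℤ × ℤ} (he : Odd (e.1 + e.2)) :
    ∏ p ∈ D with (p.1 + p.2) % 2 = σ % 2, F (p + e) =
      ∏ p ∈ D with ¬ (p.1 + p.2) % 2 = σ % 2, F p := by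
  refine prod_filter_comp_add_eq_prod_filter_not hD hF (fun v w hw => ?_) (fun p => ?_)
  · obtain ⟨k, hk⟩ := hpar w hw
    simp only [Prod.fst_add, Prod.snd_add]
    omega
  · obtain ⟨k, hk⟩ := he
    simp only [Prod.fst_add, Prod.snd_add]
    omega

theorem devron_stmt_12_general
    (Λ' : AddSubgroup (ℤ × ℤ))
    (hpar : ∀ v ∈ Λ', Even (v.1 + v.2))
    (D : Finset (ℤ × ℤ))
    (hD : ∀ v : ℤ × ℤ, ∃! d : ℤ × ℤ, d ∈ D ∧ v - d ∈ Λ')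
    (u : ℤ → ℤ → ℂ)
    (hper : ∀ (i j : ℤ) (v : ℤ × ℤ), v ∈ Λ' → u (i + v.1) (j + v.2) = u i j)
    (hne0 : ∀ i j, u i j ≠ 0) (hne1 : ∀ i j, u i j ≠ -1)
    (σ : ℤ)
    (u' : ℤ → ℤ → ℂ)
    (hu' : ∀ i j : ℤ,
      u' i j = if (i + j) % 2 = σ % 2 then
          u i j * ((1 + u i (j - 1)) * (1 + u i (j + 1))) /
            ((1 + (u (i - 1) j)⁻¹) * (1 + (u (i + 1) j)⁻¹))
        else (u i j)⁻¹) :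
    ∏ p ∈ D, u' p.1 p.2 = ∏ p ∈ D, u p.1 p.2 := by
  set U : ℤ × ℤ → ℂ := fun p => u p.1 p.2 with hUdef
  set S := D.filter fun p => (p.1 + p.2) % 2 = σ % 2
  set T := D.filter fun p => ¬ (p.1 + p.2) % 2 = σ % 2
  have hshift : ∀ (φ : ℂ → ℂ) (e : ℤ × ℤ), Odd (e.1 + e.2) →
      ∏ p ∈ S, φ (U (p + e)) = ∏ p ∈ T, φ (U p) := fun φ e he =>
    prod_checkerboard_comp_add hpar hD (F := φ ∘ U)
      (fun v w hw => by
        simp only [Function.comp, hUdef, Prod.fst_add, Prod.snd_add, hper _ _ w hw]) σ he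
  have hS : ∏ p ∈ S, u' p.1 p.2 =
      (∏ p ∈ S, U p) * (∏ p ∈ T, (1 + U p)) ^ 2 / (∏ p ∈ T, (1 + (U p)⁻¹)) ^ 2 := by
    rw [prod_congr rfl fun p hp => by rw [hu', if_pos (mem_filter.mp hp).2], prod_div_distrib,
      prod_mul_distrib, prod_mul_distrib, prod_mul_distrib]
    have h1 := hshift (1 + ·) (0, -1) (by decide)
    have h2 := hshift (1 + ·) (0, 1) (by decide)
    have h3 := hshift (1 + ·⁻¹) (-1, 0) (by decide)
    have h4 := hshift (1 + ·⁻¹) (1, 0) (by decide)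
    simp only [hUdef, Prod.fst_add, Prod.snd_add, add_zero, ← sub_eq_add_neg] at h1 h2 h3 h4
    rw [h1, h2, h3, h4, sq, sq]
  have hT : ∏ p ∈ T, u' p.1 p.2 = (∏ p ∈ T, U p)⁻¹ := by
    rw [← prod_inv_distrib]
    exact prod_congr rfl fun p hp => by rw [hu', if_neg (mem_filter.mp hp).2]
  have hU1 : ∏ p ∈ T, (1 + (U p)⁻¹) ≠ 0 :=
    prod_ne_zero_iff.mpr fun p _ => one_add_inv_ne_zero (hne1 _ _)
  calc ∏ p ∈ D, u' p.1 p.2 = (∏ p ∈ S, u' p.1 p.2) * ∏ p ∈ T, u' p.1 p.2 :=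
        (prod_filter_mul_prod_filter_not _ _ _).symm
    _ = (∏ p ∈ S, U p) * ∏ p ∈ T, U p := by
        rw [hS, hT, T.prod_one_add_eq_prod_mul_prod_one_add_inv (f := U) fun p _ => hne0 _ _]
        generalize ∏ p ∈ T, (1 + (U p)⁻¹) = d at hU1
        field_simp
    _ = ∏ p ∈ D, u p.1 p.2 := prod_filter_mul_prod_filter_not _ _ _

/-- The product `ρ` of the entries of `u` over a fundamental domain of the periodicity
lattice is conserved by the `Y`-system map `G`. -/
theorem devron_stmt_12
    (Λ' : AddSubgroup (ℤ × ℤ)) (hfin : Λ'.FiniteIndex)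
    (hpar : ∀ v ∈ Λ', Even (v.1 + v.2))
    (D : Finset (ℤ × ℤ))
    (hD : ∀ v : ℤ × ℤ, ∃! d : ℤ × ℤ, d ∈ D ∧ v - d ∈ Λ')
    (u : ℤ → ℤ → ℂ)
    (hper : ∀ (i j : ℤ) (v : ℤ × ℤ), v ∈ Λ' → u (i + v.1) (j + v.2) = u i j)
    (hne0 : ∀ i j, u i j ≠ 0) (hne1 : ∀ i j, u i j ≠ -1)
    (σ : ℤ)
    (u' : ℤ → ℤ → ℂ)
    (hu' : ∀ i j : ℤ,
      u' i j = if (i + j) % 2 = σ % 2 then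
          u i j * ((1 + u i (j - 1)) * (1 + u i (j + 1))) /
            ((1 + (u (i - 1) j)⁻¹) * (1 + (u (i + 1) j)⁻¹))
        else (u i j)⁻¹) :
    ∏ p ∈ D, u' p.1 p.2 = ∏ p ∈ D, u p.1 p.2 :=
  devron_stmt_12_general Λ' hpar D hD u hper hne0 hne1 σ u' hu'
end

section
/- Define μ on invertible data by μ([[x₁, y₁], [x₂, y₂]]) = [[y₁(x₂+y₂)/(x₁+y₁), x₁(x₂+y₂)/(x₁+y₁)], [y₂(x₁+y₁)/(x₂+y₂), x₂(x₁+y₁)/(x₂+y₂)]] and ν by ν([[x₁, y₁], [x₂, y₂]]) = [[-y₁(x₁-y₂)/(x₂-y₁), -x₁(x₂-y₁)/(x₁-y₂)], [-y₂(x₂-y₁)/(x₁-y₂), -x₂(x₁-y₂)/(x₂-y₁)]]. Then for complex numbers x₁, x₂, y₁, y₂ with x₁+y₁ ≠ 0 and x₂+y₂ ≠ 0, writing μ([[x₁,y₁],[x₂,y₂]]) = [[y₁', x₁'],[y₂', x₂']], one has (whenever the relevant denominators are nonzero) ν([[x₁, y₁'],[x₂, y₂']]) = [[-y₁, -x₁'],[-y₂,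 -x₂']]. -/
theorem sub_mul_add_div_add {K : Type*} [Field K] {x₁ y₁ : K} (x₂ y₂ : K) (h : x₁ + y₁ ≠ 0) :
    x₂ - y₁ * (x₂ + y₂) / (x₁ + y₁) = (x₁ * x₂ - y₁ * y₂) / (x₁ + y₁) := by
  field_simp
  ring

theorem devron_stmt_17_general (x₁ x₂ y₁ y₂ : ℂ)
    (h1 : x₁ + y₁ ≠ 0) (h2 : x₂ + y₂ ≠ 0)
    (y₁' x₁' y₂' x₂' : ℂ)
    (hy₁' : y₁' = y₁ * (x₂ + y₂) / (x₁ + y₁))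
    (hx₁' : x₁' = x₁ * (x₂ + y₂) / (x₁ + y₁))
    (hy₂' : y₂' = y₂ * (x₁ + y₁) / (x₂ + y₂))
    (hx₂' : x₂' = x₂ * (x₁ + y₁) / (x₂ + y₂))
    (hd1 : x₂ - y₁' ≠ 0) :
    -(y₁' * (x₁ - y₂') / (x₂ - y₁')) = -y₁ ∧
    -(x₁ * (x₂ - y₁') / (x₁ - y₂')) = -x₁' ∧
    -(y₂' * (x₂ - y₁') / (x₁ - y₂')) = -y₂ ∧
    -(x₂ * (x₁ - y₂') / (x₂ - y₁')) = -x₂' := by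
  have hd₁ : x₂ - y₁' = (x₁ * x₂ - y₁ * y₂) / (x₁ + y₁) := hy₁' ▸ sub_mul_add_div_add x₂ y₂ h1
  have hd₂ : x₁ - y₂' = (x₁ * x₂ - y₁ * y₂) / (x₂ + y₂) := by
    rw [hy₂', sub_mul_add_div_add x₁ y₁ h2, mul_comm x₂, mul_comm y₂]
  have hD : x₁ * x₂ - y₁ * y₂ ≠ 0 := fun h ↦ hd1 (by rw [hd₁, h, zero_div])
  rw [hd₁, hd₂, hy₁', hx₁', hy₂', hx₂']
  -- keeps `field_simp` from normalizing the two copies of `x₁ * x₂ - y₁ * y₂` differently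
  generalize x₁ * x₂ - y₁ * y₂ = D at hD ⊢
  refine ⟨?_, ?_, ?_, ?_⟩ <;> field_simp

/-- The compatibility between the maps `μ` and `ν`: writing
`μ([[x₁,y₁],[x₂,y₂]]) = [[y₁',x₁'],[y₂',x₂']]`, one has
`ν([[x₁,y₁'],[x₂,y₂']]) = [[-y₁,-x₁'],[-y₂,-x₂']]` whenever the relevant
denominators are nonzero. -/
theorem devron_stmt_17 (x₁ x₂ y₁ y₂ : ℂ)
    (h1 : x₁ + y₁ ≠ 0) (h2 : x₂ + y₂ ≠ 0)
    (y₁' x₁' y₂' x₂' : ℂ)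
    (hy₁' : y₁' = y₁ * (x₂ + y₂) / (x₁ + y₁))
    (hx₁' : x₁' = x₁ * (x₂ + y₂) / (x₁ + y₁))
    (hy₂' : y₂' = y₂ * (x₁ + y₁) / (x₂ + y₂))
    (hx₂' : x₂' = x₂ * (x₁ + y₁) / (x₂ + y₂))
    (hd1 : x₂ - y₁' ≠ 0) (hd2 : x₁ - y₂' ≠ 0) :
    -(y₁' * (x₁ - y₂') / (x₂ - y₁')) = -y₁ ∧
    -(x₁ * (x₂ - y₁') / (x₁ - y₂')) = -x₁' ∧
    -(y₂' * (x₂ - y₁') / (x₁ - y₂')) = -y₂ ∧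
    -(x₂ * (x₁ - y₂') / (x₂ - y₁')) = -x₂' :=
  devron_stmt_17_general x₁ x₂ y₁ y₂ h1 h2 y₁' x₁' y₂' x₂' hy₁' hx₁' hy₂' hx₂' hd1
end
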